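/- arXiv:2005.09462 — 5 statements merged into one kernel-verified Lean document; each statement's English description precedes it below -/
import Mathlib

section
/- In a tree with more than 2 vertices, with radius r and diameter d, for every integer k with r < k ≤ d there exist at least two distinct vertices of eccentricity exactly k. -/
open SimpleGraph Finset

attribute [local instance] Classical.propDecidable

variable {V : Type*}

/-- The eccentricity of a vertex: the maximum distance to any other vertex. -/
noncomputable def ecc [Fintype V] (G : SimpleGraph V) (v : V) : ℕ :=
  Finset.univ.sup fun u => G.dist v u

/-- The diameter: the maximum eccentricity. -/
noncomputable def graphDiam [Fintype V] (G : SimpleGraph V) : ℕ :=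
  Finset.univ.sup fun v => ecc G v

/-- The radius: the minimum eccentricity. -/
noncomputable def graphRad [Fintype V] [Nonempty V] (G : SimpleGraph V) : ℕ :=
  Finset.univ.inf' Finset.univ_nonempty fun v => ecc G v

/-- The Wiener-type index `W(G;g)`: sum of `g (d(u,v))` over unordered pairs of
distinct vertices (here realised as half of the sum over ordered pairs). -/
noncomputable def wiener [Fintype V] (G : SimpleGraph V) (g : ℕ → ℝ) : ℝ :=
  (∑ p ∈ Finset.univ.offDiag, g (G.dist p.1 p.2)) / 2

/-- Steiner distance of a set `A`: minimum number of edges of a subtree whose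
vertex set contains `A` (in a tree, a connected subgraph on `m+1` vertices has `m` edges). -/
noncomputable def steinerDist [Fintype V] (G : SimpleGraph V) (A : Finset V) : ℕ :=
  sInf {m | ∃ S : Finset V, A ⊆ S ∧ (G.induce (S : Set V)).Connected ∧ S.card = m + 1}

/-- The `k`-Steiner Wiener index. -/
noncomputable def steinerWiener [Fintype V] (G : SimpleGraph V) (k : ℕ) : ℕ :=
  ∑ A ∈ Finset.univ.powersetCard k, steinerDist G A

/-- A leaf (pendent vertex): a vertex of degree 1. -/
def IsLeaf (G : SimpleGraph V) (v : V) : Prop :=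
  Nat.card {u : V // G.Adj v u} = 1

/-- A caterpillar: a tree in which deleting all leaves yields a path;
equivalently (for trees) every non-leaf vertex has at most two non-leaf neighbours. -/
def IsCaterpillar (G : SimpleGraph V) : Prop :=
  ∀ v : V, ¬ IsLeaf G v → Nat.card {u : V // G.Adj v u ∧ ¬ IsLeaf G u} ≤ 2

/-- Two graphs have the same eccentric sequence. -/
def sameEccSeq {W : Type*} [Fintype V] [Fintype W]
    (G : SimpleGraph V) (H : SimpleGraph W) : Prop :=
  ∀ k : ℕ, Nat.card {v : V // ecc G v = k} = Nat.card {w : W // ecc H w = k}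


lemma tree_path_length {G : SimpleGraph V} (hG : G.IsTree) {u v : V} (p : G.Walk u v)
    (hp : p.IsPath) : p.length = G.dist u v := by
  obtain ⟨q, hq, hqlen⟩ := (hG.isConnected).exists_path_of_dist u v
  rw [(hG.existsUnique_path u v).unique hp hq, hqlen]

lemma tree_split {G : SimpleGraph V} (hG : G.IsTree) {u w : V} {p : G.Walk u w}
    (hp : p.IsPath) {v : V} (hv : v ∈ p.support) :
    G.dist u v + G.dist v w = G.dist u w := by
  classical
  have h1 := tree_path_length hG _ (hp.takeUntil hv)
  have h2 := tree_path_length hG _ (hp.dropUntil hv)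
  have h3 := tree_path_length hG p hp
  have h4 : ((p.takeUntil v hv).append (p.dropUntil v hv)).length = p.length := by
    rw [p.take_spec hv]
  rw [SimpleGraph.Walk.length_append] at h4
  omega

lemma exists_first_mem {G : SimpleGraph V} {x u : V} (Q : G.Walk x u) (S : Set V)
    (hu : u ∈ S) :
    ∃ (m : V) (Q1 : G.Walk x m) (Q2 : G.Walk m u), Q1.append Q2 = Q ∧ m ∈ S ∧
      ∀ y ∈ Q1.support, y ∈ S → y = m := by
  induction Q with
  | nil =>
    exact ⟨_, .nil, .nil, rfl, hu, by intro y hy _; simpa using hy⟩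
  | @cons a b c h Q' ih =>
    by_cases ha : a ∈ S
    · exact ⟨a, .nil, .cons h Q', rfl, ha, by intro y hy _; simpa using hy⟩
    · obtain ⟨m, Q1, Q2, happ, hm, hfirst⟩ := ih hu
      refine ⟨m, .cons h Q1, Q2, by rw [SimpleGraph.Walk.cons_append, happ], hm, ?_⟩
      intro y hy hyS
      rw [SimpleGraph.Walk.support_cons] at hy
      rcases List.mem_cons.mp hy with rfl | hy
      · exact absurd hyS ha
      · exact hfirst y hy hyS

lemma tree_median {G : SimpleGraph V} (hG : G.IsTree) {u w : V} (P : G.Walk u w)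
    (hP : P.IsPath) (x : V) :
    ∃ m ∈ P.support, G.dist x m + G.dist m u = G.dist x u ∧
      G.dist x m + G.dist m w = G.dist x w := by
  classical
  obtain ⟨Q, hQ, hQlen⟩ := (hG.isConnected).exists_path_of_dist x u
  obtain ⟨m, Q1, Q2, happ, hm, hfirst⟩ :=
    exists_first_mem Q {y | y ∈ P.support} P.start_mem_support
  have hQ' : (Q1.append Q2).IsPath := by rw [happ]; exact hQ
  have hQ1 : Q1.IsPath := hQ'.of_append_left
  have hQ2 : Q2.IsPath := hQ'.of_append_right
  have hlen : Q1.length + Q2.length = G.dist x u := by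
    rw [← hQlen, ← happ, SimpleGraph.Walk.length_append]
  have hl1 : Q1.length = G.dist x m := tree_path_length hG _ hQ1
  have hl2 : Q2.length = G.dist m u := tree_path_length hG _ hQ2
  refine ⟨m, hm, by omega, ?_⟩
  -- second equation: build the path x → m → w
  set P2 := P.dropUntil m hm with hP2def
  have hP2 : P2.IsPath := hP.dropUntil hm
  have hR : (Q1.append P2).IsPath := by
    rw [SimpleGraph.Walk.isPath_def, SimpleGraph.Walk.support_append, List.nodup_append]
    refine ⟨hQ1.support_nodup, ?_, ?_⟩
    · have := hP2.support_nodup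
      rw [P2.support_eq_cons] at this
      exact this.of_cons
    · intro y hy y' hy' hyy'; subst hyy'
      have hyP : y ∈ P.support :=
        P.support_dropUntil_subset hm (List.mem_of_mem_tail hy')
      have : y = m := hfirst y hy hyP
      subst this
      have := hP2.support_nodup
      rw [P2.support_eq_cons] at this
      exact (List.nodup_cons.mp this).1 hy'
  have hRlen := tree_path_length hG _ hR
  rw [SimpleGraph.Walk.length_append] at hRlen
  have hl3 : P2.length = G.dist m w := tree_path_length hG _ hP2
  omega

lemma tree_exists_on_path {G : SimpleGraph V} (hG : G.IsTree) :
    ∀ {u w : V} (P : G.Walk u w), P.IsPath → ∀ i ≤ P.length,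
      ∃ v ∈ P.support, G.dist u v = i ∧ G.dist v w = P.length - i := by
  intro u w P
  induction P with
  | nil =>
    intro hP i hi
    simp only [SimpleGraph.Walk.length_nil, Nat.le_zero] at hi
    subst hi
    exact ⟨_, SimpleGraph.Walk.start_mem_support _, by simp, by simp⟩
  | @cons a b c h Q' ih =>
    intro hP i hi
    rcases Nat.eq_zero_or_pos i with rfl | hpos
    · refine ⟨a, SimpleGraph.Walk.start_mem_support _, by simp, ?_⟩
      rw [Nat.sub_zero, tree_path_length hG _ hP]
    · obtain ⟨j, rfl⟩ : ∃ j, i = j + 1 := ⟨i - 1, by omega⟩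
      rw [SimpleGraph.Walk.length_cons] at hi
      obtain ⟨v, hv, hbv, hvw⟩ := ih hP.of_cons j (by omega)
      have hdab : G.dist a b = 1 := SimpleGraph.dist_eq_one_iff_adj.mpr h
      have htri1 : G.dist a v ≤ G.dist a b + G.dist b v :=
        (hG.isConnected).dist_triangle
      have htri2 : G.dist a c ≤ G.dist a v + G.dist v c :=
        (hG.isConnected).dist_triangle
      have hlen : G.dist a c = Q'.length + 1 := by
        have := tree_path_length hG _ hP
        rw [SimpleGraph.Walk.length_cons] at this
        omega
      refine ⟨v, by rw [SimpleGraph.Walk.support_cons]; exact List.mem_cons_of_mem _ hv,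
        by omega, by rw [SimpleGraph.Walk.length_cons]; omega⟩

lemma tree_ecc_on_path [Fintype V] {G : SimpleGraph V} (hG : G.IsTree) {u w : V}
    (P : G.Walk u w) (hP : P.IsPath) (hu : ecc G u ≤ G.dist u w)
    (hw : ecc G w ≤ G.dist u w) {v : V} (hv : v ∈ P.support) :
    ecc G v ≤ max (G.dist u v) (G.dist v w) := by
  classical
  rw [ecc]
  refine Finset.sup_le fun x _ => ?_
  obtain ⟨m, hm, h1, h2⟩ := tree_median hG P hP x
  have hsm := tree_split hG hP hm
  have hsv := tree_split hG hP hv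
  have hxu : G.dist x u ≤ G.dist u w := by
    have : G.dist u x ≤ ecc G u := Finset.le_sup (Finset.mem_univ x)
    rw [SimpleGraph.dist_comm (u := x) (v := u)]; omega
  have hxw : G.dist x w ≤ G.dist u w := by
    have : G.dist w x ≤ ecc G w := Finset.le_sup (Finset.mem_univ x)
    rw [SimpleGraph.dist_comm (u := x) (v := w)]; omega
  have hm' : m ∈ (P.takeUntil v hv).support ∨ m ∈ (P.dropUntil v hv).support := by
    rw [← SimpleGraph.Walk.mem_support_append_iff, P.take_spec hv]; exact hm
  have htri : G.dist v x ≤ G.dist v m + G.dist m x := (hG.isConnected).dist_triangle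
  have e1 : G.dist v m = G.dist m v := SimpleGraph.dist_comm
  have e2 : G.dist m x = G.dist x m := SimpleGraph.dist_comm
  have e3 : G.dist m u = G.dist u m := SimpleGraph.dist_comm
  rcases hm' with hcase | hcase
  · have h3 := tree_split hG (hP.takeUntil hv) hcase
    omega
  · have h3 := tree_split hG (hP.dropUntil hv) hcase
    omega

/-- In a tree with more than two vertices, every integer `k` with `r < k ≤ d`
is the eccentricity of at least two distinct vertices. -/
theorem stmt2 [Fintype V] [Nonempty V] (G : SimpleGraph V) (hG : G.IsTree)
    (hn : 2 < Fintype.card V) (k : ℕ) (h1 : graphRad G < k) (h2 : k ≤ graphDiam G) :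
    ∃ v w : V, v ≠ w ∧ ecc G v = k ∧ ecc G w = k := by
  classical
  set D := Finset.univ.sup (fun v => ecc G v) with hDdef
  obtain ⟨u, -, hu⟩ := Finset.exists_mem_eq_sup Finset.univ Finset.univ_nonempty
    (fun v => ecc G v)
  obtain ⟨w, -, hw⟩ := Finset.exists_mem_eq_sup Finset.univ Finset.univ_nonempty
    (fun x => G.dist u x)
  have hew1 : ecc G u = G.dist u w := hw
  have hDuw : G.dist u w = D := by rw [← hew1, ← hu]
  have hwD : ecc G w = D := by
    refine le_antisymm (hDdef ▸ Finset.le_sup (Finset.mem_univ w)) ?_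
    rw [← hDuw, SimpleGraph.dist_comm (u := u) (v := w)]
    exact Finset.le_sup (Finset.mem_univ u)
  obtain ⟨c, -, hc⟩ := Finset.exists_mem_eq_inf' Finset.univ_nonempty (fun v => ecc G v)
  have hcu : G.dist c u ≤ ecc G c := Finset.le_sup (Finset.mem_univ u)
  have hcw : G.dist c w ≤ ecc G c := Finset.le_sup (Finset.mem_univ w)
  have htri : G.dist u w ≤ G.dist u c + G.dist c w := hG.isConnected.dist_triangle
  have hcomm : G.dist u c = G.dist c u := SimpleGraph.dist_comm
  have hrk : ecc G c < k := by rw [← hc]; exact h1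
  have hkD : k ≤ D := h2
  have hDk : D - k < k := by omega
  obtain ⟨P, hP, hPlen⟩ := hG.isConnected.exists_path_of_dist u w
  have hPl : P.length = D := by rw [hPlen, hDuw]
  obtain ⟨v1, hv1m, hv1u, hv1w⟩ := tree_exists_on_path hG P hP (D - k) (by omega)
  obtain ⟨v2, hv2m, hv2u, hv2w⟩ := tree_exists_on_path hG P hP k (by omega)
  rw [hPl] at hv1w hv2w
  have hv1w' : G.dist v1 w = k := by omega
  have hv2w' : G.dist v2 w = D - k := by omega
  have hu' : ecc G u ≤ G.dist u w := le_of_eq hew1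
  have hw' : ecc G w ≤ G.dist u w := by rw [hwD, hDuw]
  have l1 : G.dist v1 w ≤ ecc G v1 := Finset.le_sup (Finset.mem_univ w)
  have u1 : ecc G v1 ≤ max (G.dist u v1) (G.dist v1 w) :=
    tree_ecc_on_path hG P hP hu' hw' hv1m
  have e1 : ecc G v1 = k := by rw [hv1u, hv1w'] at u1; omega
  have l2 : G.dist v2 u ≤ ecc G v2 := Finset.le_sup (Finset.mem_univ u)
  have hc2 : G.dist v2 u = G.dist u v2 := SimpleGraph.dist_comm
  have u2 : ecc G v2 ≤ max (G.dist u v2) (G.dist v2 w) :=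
    tree_ecc_on_path hG P hP hu' hw' hv2m
  have e2 : ecc G v2 = k := by rw [hv2u, hv2w'] at u2; omega
  exact ⟨v1, v2, fun hvv => by rw [hvv, hv2u] at hv1u; omega, e1, e2⟩
end

section
/- For every tree T with n vertices and every edge e of T, the number of k-element subsets A of V(T) whose Steiner tree contains the edge e equals C(n,k) - C(n_1(e),k) - C(n_2(e),k), where n_1(e) and n_2(e) are the orders of the two components of T - e. Consequently, the k-Steiner Wiener index satisfies SW_k(T) = Σ_{e ∈ E(T)} [C(n,k) - C(n_1(e),k) - C(n_2(e),k)]. -/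
open SimpleGraph Finset

attribute [local instance] Classical.propDecidable

variable {V : Type*}

/-- The number of vertices of the component of `a` in `G` minus the edge `ab`. -/
noncomputable def compSize [Fintype V] (G : SimpleGraph V) (a b : V) : ℕ :=
  Nat.card {x : V // (G.deleteEdges {s(a, b)}).Reachable a x}

/-- The Steiner tree of `A` (the minimum connected subtree containing `A`) contains
the edge `ab`, i.e. some minimum-order connected superset of `A` contains both `a` and `b`. -/
def steinerContains [Fintype V] (G : SimpleGraph V) (A : Finset V) (a b : V) : Prop :=
  ∃ S : Finset V, A ⊆ S ∧ (G.induce (S : Set V)).Connected ∧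
    S.card = steinerDist G A + 1 ∧ a ∈ S ∧ b ∈ S

/-!
An edge `ab` of a tree `T` splits the vertices into the side of `a` and the side of `b` in
`T - ab`. A connected vertex set meeting both sides must contain `a` and `b`. Conversely, if a
minimum connected superset `S` of `A` contains `a` and `b` while `A` lies within the side of `b`,
then `S` intersected with that side is a smaller connected superset of `A`, since in an acyclic
graph two connected vertex sets have connected intersection. So the Steiner tree of `A` contains
`ab` exactly when `A` lies in neither side, and these `k`-sets are counted by complementation.
Summing over the edges and exchanging the sums gives `SW_k`, because the Steiner tree of `A` has
`d(A)` edges.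
-/

namespace SimpleGraph

variable {G : SimpleGraph V}

theorem mem_of_mem_support_map_induce {s : Set V} {u v : s} (p : (G.induce s).Walk u v) {x : V}
    (hx : x ∈ (p.map (Embedding.induce s).toHom).support) : x ∈ s := by
  rw [Walk.support_map, List.mem_map] at hx
  obtain ⟨y, -, rfl⟩ := hx
  exact y.2

theorem IsAcyclic.preconnected_induce_inter (hG : G.IsAcyclic) {s t : Set V}
    (hs : (G.induce s).Preconnected) (ht : (G.induce t).Preconnected) :
    (G.induce (s ∩ t)).Preconnected := by
  rintro ⟨x, hxs, hxt⟩ ⟨y, hys, hyt⟩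
  obtain ⟨p⟩ := hs ⟨x, hxs⟩ ⟨y, hys⟩
  obtain ⟨q⟩ := ht ⟨x, hxt⟩ ⟨y, hyt⟩
  -- the unique path from `x` to `y` lies in both `s` and `t`
  set P := (p.map (Embedding.induce s).toHom).toPath
  have hPq : P = (q.map (Embedding.induce t).toHom).toPath := (hG.subsingleton_path _ _).elim _ _
  have hPs : ∀ z ∈ P.1.support, z ∈ s := fun z hz =>
    mem_of_mem_support_map_induce p (Walk.support_toPath_subset_support _ hz)
  have hPt : ∀ z ∈ P.1.support, z ∈ t := fun z hz =>
    mem_of_mem_support_map_induce q (Walk.support_toPath_subset_support _ (hPq ▸ hz))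
  exact ⟨P.1.induce (s ∩ t) fun z hz => ⟨hPs z hz, hPt z hz⟩⟩

theorem connected_induce_setOf_reachable {H : SimpleGraph V} (hH : H ≤ G) (b : V) :
    (G.induce {x | H.Reachable b x}).Connected := by
  have hsupp : {x | H.Reachable b x} = (H.connectedComponentMk b).supp := by
    ext x
    simp [ConnectedComponent.mem_supp_iff, ConnectedComponent.eq, reachable_comm]
  rw [hsupp]
  exact (H.connectedComponentMk b).connected_toSimpleGraph.mono (comap_monotone _ hH)

variable [Fintype V]

noncomputable def edgeSide (G : SimpleGraph V) (a b : V) : Finset V :=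
  {x | (G.deleteEdges {s(a, b)}).Reachable a x}

variable {a b : V}

theorem mem_edgeSide {x : V} :
    x ∈ edgeSide G a b ↔ (G.deleteEdges {s(a, b)}).Reachable a x := by
  simp [edgeSide]

theorem mem_edgeSide_swap {x : V} :
    x ∈ edgeSide G b a ↔ (G.deleteEdges {s(a, b)}).Reachable b x := by
  rw [mem_edgeSide, Sym2.eq_swap]

theorem card_edgeSide : #(edgeSide G a b) = compSize G a b := by
  rw [compSize, Nat.card_eq_fintype_card, Fintype.card_subtype, edgeSide]

theorem mem_edgeSide_or_mem_edgeSide (hG : G.Preconnected) (x : V) :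
    x ∈ edgeSide G a b ∨ x ∈ edgeSide G b a := by
  rw [mem_edgeSide, mem_edgeSide_swap]
  induction (reachable_iff_reflTransGen a x).1 (hG a x) with
  | refl => exact Or.inl .rfl
  | @tail u v _ huv ih =>
    by_cases he : s(u, v) = s(a, b)
    · rcases Sym2.eq_iff.1 he with ⟨-, rfl⟩ | ⟨-, rfl⟩
      · exact Or.inr .rfl
      · exact Or.inl .rfl
    · have huv' : (G.deleteEdges {s(a, b)}).Adj u v := by simp [huv, he]
      exact ih.imp (·.trans huv'.reachable) (·.trans huv'.reachable)

theorem disjoint_edgeSide (hab : G.IsBridge s(a, b)) :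
    Disjoint (edgeSide G a b) (edgeSide G b a) := by
  rw [Finset.disjoint_left]
  intro x hxa hxb
  rw [mem_edgeSide] at hxa
  rw [mem_edgeSide_swap] at hxb
  exact isBridge_iff.1 hab (hxa.trans hxb.symm)

end SimpleGraph

theorem card_filter_powersetCard_not_subset {α : Type*} [Fintype α] {s t : Finset α}
    (hst : Disjoint s t) (k : ℕ) :
    #{A ∈ powersetCard k (univ : Finset α) | ¬ A ⊆ s ∧ ¬ A ⊆ t} =
      (Fintype.card α).choose k - (#s).choose k - (#t).choose k := by
  rcases k.eq_zero_or_pos with rfl | hk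
  · simp
  have hdisj : Disjoint {A ∈ powersetCard k (univ : Finset α) | A ⊆ s}
      {A ∈ powersetCard k (univ : Finset α) | A ⊆ t} := by
    rw [disjoint_filter]
    intro A hA hAs hAt
    obtain ⟨x, hx⟩ := card_pos.1 ((mem_powersetCard.1 hA).2 ▸ hk)
    exact disjoint_left.1 hst (hAs hx) (hAt hx)
  have hsub (u : Finset α) :
      {A ∈ powersetCard k (univ : Finset α) | A ⊆ u} = powersetCard k u := by
    ext A
    simp [mem_powersetCard, and_comm]
  simp_rw [← not_or]
  rw [filter_not, card_sdiff_of_subset (filter_subset _ _), filter_or,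
    card_union_of_disjoint hdisj, hsub, hsub, card_powersetCard, card_powersetCard,
    card_powersetCard, card_univ]
  omega

theorem card_filter_adj_mem_mem [Fintype V] {G : SimpleGraph V} (S : Finset V) :
    #{p : V × V | G.Adj p.1 p.2 ∧ p.1 ∈ S ∧ p.2 ∈ S} =
      2 * #(G.induce (S : Set V)).edgeFinset := by
  rw [two_mul_card_edgeFinset]
  symm
  refine card_bij (fun q _ => ((q.1 : V), (q.2 : V))) ?_ ?_ ?_
  · rintro ⟨x, y⟩ hq
    simpa [x.2, y.2] using hq
  · rintro ⟨x, y⟩ - ⟨x', y'⟩ - h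
    simp only [Prod.mk.injEq] at h
    exact Prod.ext (Subtype.ext h.1) (Subtype.ext h.2)
  · rintro ⟨x, y⟩ hp
    simp only [mem_filter, mem_univ, true_and] at hp
    exact ⟨(⟨x, hp.2.1⟩, ⟨y, hp.2.2⟩), by simpa using hp.1, rfl⟩

section Steiner

variable [Fintype V] {G : SimpleGraph V} {A S : Finset V} {a b : V}

def IsSteinerTree (G : SimpleGraph V) (A S : Finset V) : Prop :=
  A ⊆ S ∧ (G.induce (S : Set V)).Connected ∧ #S = steinerDist G A + 1

theorem steinerDist_add_one_le (hAS : A ⊆ S) (hS : (G.induce (S : Set V)).Connected) :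
    steinerDist G A + 1 ≤ #S := by
  obtain ⟨x⟩ := hS.nonempty
  have hpos : 0 < #S := card_pos.2 ⟨x, x.2⟩
  have : steinerDist G A ≤ #S - 1 := Nat.sInf_le ⟨S, hAS, hS, by omega⟩
  omega

theorem exists_isSteinerTree (hG : G.Connected) (A : Finset V) : ∃ S, IsSteinerTree G A S := by
  have := hG.nonempty
  refine Nat.sInf_mem (s := {m | ∃ S : Finset V, A ⊆ S ∧ (G.induce (S : Set V)).Connected ∧
    #S = m + 1}) ⟨Fintype.card V - 1, univ, subset_univ A, ?_, ?_⟩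
  · rwa [coe_univ, (induceUnivIso G).connected_iff]
  · rw [card_univ]
    have := Fintype.card_pos (α := V)
    omega

theorem IsSteinerTree.not_subset_edgeSide (hG : G.IsAcyclic) (hS : IsSteinerTree G A S)
    (hab : G.Adj a b) (ha : a ∈ S) (hb : b ∈ S) : ¬ A ⊆ edgeSide G b a := by
  intro hA
  have hS' : (G.induce ((S ∩ edgeSide G b a : Finset V) : Set V)).Connected := by
    have hside : (edgeSide G b a : Set V) = {x | (G.deleteEdges {s(b, a)}).Reachable b x} := by
      ext; simp [mem_edgeSide]
    rw [connected_iff, coe_inter, hside]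
    exact ⟨hG.preconnected_induce_inter hS.2.1.preconnected
      (connected_induce_setOf_reachable (deleteEdges_le _) b).preconnected, ⟨b, hb, .rfl⟩⟩
  have hle := steinerDist_add_one_le (subset_inter hS.1 hA) hS'
  have hlt : #(S ∩ edgeSide G b a) < #S := by
    refine card_lt_card ⟨inter_subset_left, fun h => ?_⟩
    have hbridge := isAcyclic_iff_forall_adj_isBridge.1 hG hab
    exact disjoint_left.1 (disjoint_edgeSide hbridge) (mem_edgeSide.2 .rfl) (mem_inter.1 (h ha)).2
  have := hS.2.2
  omega

theorem mem_of_not_subset_edgeSide (hG : G.Preconnected) (hab : G.IsBridge s(a, b))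
    (hAS : A ⊆ S) (hS : (G.induce (S : Set V)).Preconnected) (ha : ¬ A ⊆ edgeSide G a b)
    (hb : ¬ A ⊆ edgeSide G b a) : a ∈ S ∧ b ∈ S := by
  obtain ⟨u, huA, hu⟩ := not_subset.1 hb
  obtain ⟨v, hvA, hv⟩ := not_subset.1 ha
  replace hu := (mem_edgeSide_or_mem_edgeSide hG u).resolve_right hu
  replace hv := (mem_edgeSide_or_mem_edgeSide hG v).resolve_left hv
  obtain ⟨p⟩ := hS ⟨u, hAS huA⟩ ⟨v, hAS hvA⟩
  have hp : s(a, b) ∈ (p.map (Embedding.induce _).toHom).edges :=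
    Walk.mem_edges_of_not_reachable_deleteEdges _ fun huv => isBridge_iff.1 hab
      ((mem_edgeSide.1 hu).trans (huv.trans (mem_edgeSide_swap.1 hv).symm))
  exact ⟨mem_of_mem_support_map_induce p (Walk.fst_mem_support_of_mem_edges _ hp),
    mem_of_mem_support_map_induce p (Walk.snd_mem_support_of_mem_edges _ hp)⟩

theorem steinerContains_iff_not_subset_edgeSide (hG : G.IsTree) (hab : G.Adj a b) :
    steinerContains G A a b ↔ ¬ A ⊆ edgeSide G a b ∧ ¬ A ⊆ edgeSide G b a := by
  constructor
  · rintro ⟨S, hAS, hS, hcard, ha, hb⟩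
    have hST : IsSteinerTree G A S := ⟨hAS, hS, hcard⟩
    exact ⟨hST.not_subset_edgeSide hG.isAcyclic hab.symm hb ha,
      hST.not_subset_edgeSide hG.isAcyclic hab ha hb⟩
  · rintro ⟨ha, hb⟩
    obtain ⟨S, hAS, hS, hcard⟩ := exists_isSteinerTree hG.connected A
    obtain ⟨haS, hbS⟩ := mem_of_not_subset_edgeSide hG.connected.preconnected
      (isAcyclic_iff_forall_adj_isBridge.1 hG.isAcyclic hab) hAS hS.preconnected ha hb
    exact ⟨S, hAS, hS, hcard, haS, hbS⟩

theorem IsSteinerTree.steinerContains_iff_mem (hG : G.IsTree) (hS : IsSteinerTree G A S)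
    (hab : G.Adj a b) : steinerContains G A a b ↔ a ∈ S ∧ b ∈ S := by
  refine ⟨fun h => ?_, fun ⟨ha, hb⟩ => ⟨S, hS.1, hS.2.1, hS.2.2, ha, hb⟩⟩
  obtain ⟨ha, hb⟩ := (steinerContains_iff_not_subset_edgeSide hG hab).1 h
  exact mem_of_not_subset_edgeSide hG.connected.preconnected
    (isAcyclic_iff_forall_adj_isBridge.1 hG.isAcyclic hab) hS.1 hS.2.1.preconnected ha hb

theorem card_filter_steinerContains (hG : G.IsTree) (A : Finset V) :
    #{p ∈ univ.filter (fun p : V × V => G.Adj p.1 p.2) | steinerContains G A p.1 p.2} =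
      2 * steinerDist G A := by
  obtain ⟨S, hS⟩ := exists_isSteinerTree hG.connected A
  have hT : (G.induce (S : Set V)).IsTree := ⟨hS.2.1, hG.isAcyclic.induce _⟩
  have hedges := hT.card_edgeFinset
  simp only [coe_sort_coe, Fintype.card_coe, hS.2.2] at hedges
  rw [filter_filter, filter_congr fun p _ => and_congr_right (hS.steinerContains_iff_mem hG),
    card_filter_adj_mem_mem]
  omega

end Steiner

/-- Each edge appears in the sum as two ordered pairs, whence the factor `2`. -/
theorem stmt5 [Fintype V] (G : SimpleGraph V) (hG : G.IsTree) (k : ℕ) :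
    (∀ a b : V, G.Adj a b →
      ((Finset.univ.powersetCard k).filter (fun A => steinerContains G A a b)).card =
        Nat.choose (Fintype.card V) k - Nat.choose (compSize G a b) k -
          Nat.choose (compSize G b a) k) ∧
    2 * steinerWiener G k =
      ∑ p ∈ Finset.univ.filter (fun p : V × V => G.Adj p.1 p.2),
        (Nat.choose (Fintype.card V) k - Nat.choose (compSize G p.1 p.2) k -
          Nat.choose (compSize G p.2 p.1) k) := by
  have hcount (a b : V) (hab : G.Adj a b) :
      #{A ∈ univ.powersetCard k | steinerContains G A a b} =
        (Fintype.card V).choose k - (compSize G a b).choose k - (compSize G b a).choose k := by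
    rw [filter_congr fun A _ => steinerContains_iff_not_subset_edgeSide hG hab,
      card_filter_powersetCard_not_subset
        (disjoint_edgeSide (isAcyclic_iff_forall_adj_isBridge.1 hG.isAcyclic hab)),
      card_edgeSide, card_edgeSide]
  refine ⟨hcount, ?_⟩
  rw [← sum_congr rfl fun p hp => hcount p.1 p.2 (mem_filter.1 hp).2, steinerWiener, mul_sum]
  exact ((sum_card_bipartiteAbove_eq_sum_card_bipartiteBelow _).trans
    (sum_congr rfl fun A _ => card_filter_steinerContains hG A)).symm
end

section
/- For every tree T with n ≥ 3 vertices, SW_3(T) = ((n-2)/2) · W(T), i.e., 2·SW_3(T) = (n-2)·W(T). -/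
open SimpleGraph Finset

attribute [local instance] Classical.propDecidable

variable {V : Type*}

/-!
In a tree, three vertices `u, v, w` have a median `m` lying on all three geodesics between them,
and the union of the geodesics from `m` to `u, v, w` is the smallest subtree containing all three
vertices. Its edge count is therefore `d(u,m) + d(v,m) + d(w,m)`, i.e. half of
`d(u,v) + d(v,w) + d(u,w)`; the same count inside any connected superset, which is again a
tree, gives the matching lower bound. Summing `4 d(A) = Σ_{(x,y) ∈ A², x ≠ y} d(x,y)` over all
triples `A` counts each ordered pair of distinct vertices `n - 2` times, so
`2 SW₃(T) = (n - 2) W(T)`.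
-/

theorem Finset.sum_powersetCard_sum_offDiag {α M : Type*} [AddCommMonoid M] (s : Finset α)
    {k : ℕ} (hk : 2 ≤ k) (f : α × α → M) :
    ∑ A ∈ s.powersetCard k, ∑ p ∈ A.offDiag, f p =
      (#s - 2).choose (k - 2) • ∑ p ∈ s.offDiag, f p := by
  rw [smul_sum, sum_comm' (t' := s.offDiag)
    (s' := fun p ↦ (s.powersetCard k).filter ({p.1, p.2} ⊆ ·))]
  · refine sum_congr rfl fun p hp ↦ ?_
    obtain ⟨hp₁, hp₂, hne⟩ := mem_offDiag.mp hp
    rw [sum_const, card_filter_powersetCard_subset _ _ _ (by simp [insert_subset_iff, hp₁, hp₂])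
      (by rw [card_pair hne]; exact hk), card_pair hne]
  · intro A p
    simp only [mem_powersetCard, mem_offDiag, mem_filter, insert_subset_iff,
      singleton_subset_iff]
    constructor
    · rintro ⟨⟨hAs, hA⟩, h₁, h₂, hne⟩
      exact ⟨⟨⟨hAs, hA⟩, h₁, h₂⟩, hAs h₁, hAs h₂, hne⟩
    · tauto

namespace SimpleGraph

variable {W W' : Type*} {H : SimpleGraph W} {a b m : W}

theorem Reachable.dist_map_le {H' : SimpleGraph W'} (f : H →g H') (hr : H.Reachable a b) :
    H'.dist (f a) (f b) ≤ H.dist a b := by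
  obtain ⟨p, hp⟩ := hr.exists_walk_length_eq_dist
  simpa [hp] using dist_le (p.map f)

theorem IsAcyclic.length_eq_dist (hH : H.IsAcyclic) {p : H.Walk a b} (hp : p.IsPath) :
    p.length = H.dist a b := by
  obtain ⟨q, hq, hqd⟩ := p.reachable.exists_path_of_dist
  obtain rfl : p = q :=
    congrArg Subtype.val ((hH.subsingleton_path a b).elim ⟨p, hp⟩ ⟨q, hq⟩)
  exact hqd

theorem IsAcyclic.dist_eq_add_of_isPath_append (hH : H.IsAcyclic) {p : H.Walk a m}
    {q : H.Walk m b} (h : (p.append q).IsPath) : H.dist a b = H.dist a m + H.dist m b := by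
  rw [← hH.length_eq_dist h, ← hH.length_eq_dist h.of_append_left,
    ← hH.length_eq_dist h.of_append_right, Walk.length_append]

theorem Walk.IsPath.append_of_support_inter {p : H.Walk a m} {q : H.Walk m b} (hp : p.IsPath)
    (hq : q.IsPath) (h : ∀ x ∈ p.support, x ∈ q.support → x = m) : (p.append q).IsPath := by
  have hq' := hq.support_nodup
  rw [← q.cons_tail_support, List.nodup_cons] at hq'
  rw [Walk.isPath_def, Walk.support_append, List.nodup_append]
  refine ⟨hp.support_nodup, hq'.2, ?_⟩
  rintro x hxp _ hxq rfl
  exact hq'.1 (h x hxp (List.mem_of_mem_tail hxq) ▸ hxq)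

theorem Walk.exists_eq_append_of_end_mem (S : Set W) (r : H.Walk a b) (hb : b ∈ S) :
    ∃ (m : W) (r₁ : H.Walk a m) (r₂ : H.Walk m b),
      m ∈ S ∧ r = r₁.append r₂ ∧ ∀ x ∈ r₁.support, x ∈ S → x = m := by
  induction r with
  | nil => exact ⟨_, .nil, .nil, hb, rfl, by simp⟩
  | @cons a c b h r ih =>
    by_cases ha : a ∈ S
    · exact ⟨a, .nil, .cons h r, ha, rfl, by simp⟩
    obtain ⟨m, r₁, r₂, hm, rfl, hfirst⟩ := ih hb
    refine ⟨m, .cons h r₁, r₂, hm, rfl, ?_⟩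
    intro x hx hxS
    rw [Walk.support_cons, List.mem_cons] at hx
    rcases hx with rfl | hx
    · exact absurd hxS ha
    · exact hfirst x hx hxS

theorem Walk.IsPath.card_support_toFinset [DecidableEq W] {p : H.Walk a b} (hp : p.IsPath) :
    #p.support.toFinset = p.length + 1 := by
  rw [List.toFinset_card_of_nodup hp.support_nodup, Walk.length_support]

theorem IsTree.exists_superset_connected_induce_two_mul_card (hH : H.IsTree) (u v w : W) :
    ∃ t : Finset W, {u, v, w} ⊆ t ∧ (H.induce (t : Set W)).Connected ∧
      2 * #t = H.dist u v + H.dist v w + H.dist u w + 2 := by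
  -- `m` is where the geodesic from `w` to `u` first meets the geodesic from `u` to `v`.
  obtain ⟨p, hp, hpd⟩ := hH.connected.exists_path_of_dist u v
  obtain ⟨r, hr, -⟩ := hH.connected.exists_path_of_dist w u
  obtain ⟨m, r₁, r₂, hm, rfl, hfirst⟩ :=
    r.exists_eq_append_of_end_mem {x | x ∈ p.support} p.start_mem_support
  have hr₁ : r₁.IsPath := hr.of_append_left
  have hwmv : (r₁.append (p.dropUntil m hm)).IsPath :=
    hr₁.append_of_support_inter (hp.dropUntil hm)
      fun x hx hx' ↦ hfirst x hx (p.support_dropUntil_subset_support hm hx')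
  have huv := hH.isAcyclic.dist_eq_add_of_isPath_append (p.take_spec hm ▸ hp)
  have hwu := hH.isAcyclic.dist_eq_add_of_isPath_append hr
  have hwv := hH.isAcyclic.dist_eq_add_of_isPath_append hwmv
  have hinter : p.support.toFinset ∩ r₁.support.toFinset = {m} := by
    ext x
    simp only [mem_inter, List.mem_toFinset, mem_singleton]
    exact ⟨fun h ↦ hfirst x h.2 h.1, by rintro rfl; exact ⟨hm, r₁.end_mem_support⟩⟩
  refine ⟨p.support.toFinset ∪ r₁.support.toFinset, ?_, ?_, ?_⟩
  · simp [insert_subset_iff]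
  · rw [coe_union, List.coe_toFinset, List.coe_toFinset]
    exact induce_union_connected p.connected_induce_support.preconnected
      r₁.connected_induce_support.preconnected ⟨m, hm, r₁.end_mem_support⟩
  · have hcard := card_union_add_card_inter p.support.toFinset r₁.support.toFinset
    rw [hinter, card_singleton, hp.card_support_toFinset, hr₁.card_support_toFinset,
      hH.isAcyclic.length_eq_dist hr₁] at hcard
    have := H.dist_comm (u := w) (v := u)
    have := H.dist_comm (u := w) (v := v)
    have := H.dist_comm (u := m) (v := u)
    omega

theorem IsAcyclic.dist_add_dist_add_dist_add_two_le_two_mul_card {G : SimpleGraph V}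
    (hG : G.IsAcyclic) {u v w : V} {S : Finset V} (hS : {u, v, w} ⊆ S)
    (hconn : (G.induce (S : Set V)).Connected) :
    G.dist u v + G.dist v w + G.dist u w + 2 ≤ 2 * #S := by
  simp only [insert_subset_iff, singleton_subset_iff] at hS
  obtain ⟨hu, hv, hw⟩ := hS
  have hStree : (G.induce (S : Set V)).IsTree := ⟨hconn, hG.induce _⟩
  obtain ⟨t, -, -, ht⟩ :=
    hStree.exists_superset_connected_induce_two_mul_card ⟨u, hu⟩ ⟨v, hv⟩ ⟨w, hw⟩
  have hdist (x y : (S : Set V)) : G.dist x y ≤ (G.induce (S : Set V)).dist x y :=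
    (hconn x y).dist_map_le (Embedding.induce (S : Set V)).toHom
  have htS : #t ≤ #S := by simpa using card_le_univ t
  have := hdist ⟨u, hu⟩ ⟨v, hv⟩
  have := hdist ⟨v, hv⟩ ⟨w, hw⟩
  have := hdist ⟨u, hu⟩ ⟨w, hw⟩
  dsimp only at *
  omega

theorem IsTree.two_mul_steinerDist_triple [Fintype V] {G : SimpleGraph V}
    (hG : G.IsTree) (u v w : V) :
    2 * steinerDist G {u, v, w} = G.dist u v + G.dist v w + G.dist u w := by
  obtain ⟨t, hsub, hconn, hcard⟩ := hG.exists_superset_connected_induce_two_mul_card u v w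
  have hmem : #t - 1 ∈ {m | ∃ S : Finset V, {u, v, w} ⊆ S ∧
      (G.induce (S : Set V)).Connected ∧ #S = m + 1} := ⟨t, hsub, hconn, by omega⟩
  have hle : steinerDist G {u, v, w} ≤ #t - 1 := Nat.sInf_le hmem
  obtain ⟨S, hS, hSconn, hScard⟩ := Nat.sInf_mem ⟨_, hmem⟩
  have hge := hG.isAcyclic.dist_add_dist_add_dist_add_two_le_two_mul_card hS hSconn
  rw [steinerDist] at hle ⊢
  omega

theorem IsTree.sum_offDiag_dist_eq_four_mul_steinerDist [Fintype V]
    {G : SimpleGraph V} (hG : G.IsTree) {A : Finset V} (hA : #A = 3) :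
    ∑ p ∈ A.offDiag, G.dist p.1 p.2 = 4 * steinerDist G A := by
  obtain ⟨x, y, z, hxy, hxz, hyz, rfl⟩ := card_eq_three.mp hA
  have hdiag : ∑ p ∈ ({x, y, z} : Finset V).diag, G.dist p.1 p.2 = 0 :=
    sum_eq_zero fun p hp ↦ by rw [(mem_diag.mp hp).2, dist_self]
  rw [← zero_add (∑ p ∈ _, _), ← hdiag, ← sum_union (disjoint_diag_offDiag _),
    diag_union_offDiag, sum_product]
  simp only [mem_insert, mem_singleton, hxy, hxz, hyz, or_self, not_false_eq_true, sum_insert,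
    sum_singleton, dist_self, zero_add, add_zero]
  have := hG.two_mul_steinerDist_triple x y z
  rw [G.dist_comm (u := y) (v := x), G.dist_comm (u := z) (v := x),
    G.dist_comm (u := z) (v := y)]
  omega

end SimpleGraph

/-- For every tree on `n ≥ 3` vertices, `2 · SW₃(T) = (n - 2) · W(T)`. -/
theorem stmt6 [Fintype V] (G : SimpleGraph V) (hG : G.IsTree)
    (hn : 3 ≤ Fintype.card V) :
    2 * (steinerWiener G 3 : ℝ) =
      ((Fintype.card V : ℝ) - 2) * wiener G (fun m => (m : ℝ)) := by
  have hcount : 4 * steinerWiener G 3 =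
      (Fintype.card V - 2) * ∑ p ∈ univ.offDiag, G.dist p.1 p.2 := by
    rw [steinerWiener, mul_sum, ← sum_congr rfl fun A hA ↦
      hG.sum_offDiag_dist_eq_four_mul_steinerDist (mem_powersetCard_univ.mp hA),
      sum_powersetCard_sum_offDiag _ (by norm_num), Nat.choose_one_right, card_univ, smul_eq_mul]
  have hcast := congrArg (Nat.cast : ℕ → ℝ) hcount
  push_cast [Nat.cast_sub (by omega : 2 ≤ Fintype.card V)] at hcast
  rw [wiener]
  linarith
end

section
/- Let T be a tree that is not a caterpillar, let P = v_0,...,v_d be a longest path, v_j a vertex of P (with j ≥ d/2) having a non-leaf neighbour u not on P, and let T' be the mate of T obtained by detaching all neighbours z of u in the components of T - u not containing P and reattaching them to v_{j+1}. Then every vertex has the same eccentricity in T' as in T; in particular T and T' have the same eccentric sequence. -/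
open SimpleGraph Finset

attribute [local instance] Classical.propDecidable

variable {V : Type*}

/-- `mateU G u w`: the set of vertices lying in components of `G - u` not containing
the vertex `w` (a vertex of the longest path): those `x ≠ u` not reachable from `w`
once all edges at `u` are removed. -/
def mateU (G : SimpleGraph V) (u w : V) : Set V :=
  {x | x ≠ u ∧ ¬ (G.deleteEdges {e : Sym2 V | u ∈ e}).Reachable x w}

/-- The mate of `G` w.r.t. the path vertex `w = v_j`, its successor `w' = v_{j+1}` and
the off-path non-leaf neighbour `u`: each edge `uz` with `z ∈ U` is replaced by `w'z`. -/
def mate (G : SimpleGraph V) (u w w' : V) : SimpleGraph V :=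
  (G.deleteEdges {e | ∃ z ∈ mateU G u w, G.Adj u z ∧ e = s(u, z)}) ⊔
    SimpleGraph.fromEdgeSet {e | ∃ z ∈ mateU G u w, G.Adj u z ∧ e = s(w', z)}

/-- `R`: the vertices of `V - U` in the component of `G - v_j v_{j+1}` containing `v_{j+1}`. -/
def mateR (G : SimpleGraph V) (u vj vj1 : V) : Set V :=
  {x | x ∉ mateU G u vj ∧ (G.deleteEdges {s(vj, vj1)}).Reachable x vj1}

/-! The neighbour `u` separates `U` from the rest of `T`, and in `T'` the vertex `v_{j+1}` takes
over this role; distances between vertices outside `U`, and from `U` to its separating vertex,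
are the same in both trees. Since `j ≥ d/2`, every vertex is within `j` of `v_j`, so both `u` in
`T` and `v_{j+1}` in `T'` have eccentricity `j + 1`, attained at `v_0 ∉ U`; hence a vertex of `U`
has eccentricity (distance to its separating vertex) `+ j + 1` in both trees. For a vertex `v`
outside `U`, `v_j` lies on a geodesic from `v` to `v_0` or to `v_d`, and `U` hangs at most
`d - j - 1` below `u`, so no vertex of `U` is farther from `v` than `v_0` or `v_d` is, in either
tree: the eccentricity of `v` is decided outside `U`. -/

namespace SimpleGraph

variable {G H : SimpleGraph V} {S : Set V} {a b c x y : V}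

def ExitsVia (G : SimpleGraph V) (S : Set V) (c : V) : Prop :=
  ∀ ⦃a b⦄, G.Adj a b → a ∈ S → b ∉ S → b = c

theorem Walk.dist_add_dist_le_length (q : G.Walk x y) (hc : c ∈ q.support) :
    G.dist x c + G.dist c y ≤ q.length :=
  calc G.dist x c + G.dist c y ≤ (q.takeUntil c hc).length + (q.dropUntil c hc).length :=
        add_le_add (dist_le _) (dist_le _)
    _ = q.length := by rw [← Walk.length_append, q.take_spec hc]

theorem Walk.exists_walk_length_eq {q : G.Walk x y}
    (h : ∀ ⦃a b⦄, s(a, b) ∈ q.edges → H.Adj a b) : ∃ q' : H.Walk x y, q'.length = q.length :=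
  ⟨q.transfer H fun e he => by induction e using Sym2.ind with | _ a b => exact h he,
    Walk.length_transfer _ _⟩

theorem ExitsVia.dist_eq_add (hG : G.Connected) (h : G.ExitsVia S c) (hx : x ∈ S)
    (hy : y ∉ S) : G.dist x y = G.dist x c + G.dist c y := by
  refine le_antisymm hG.dist_triangle ?_
  obtain ⟨q, hq⟩ := hG.exists_walk_length_eq_dist x y
  obtain ⟨d, hd, hd₁, hd₂⟩ := q.exists_boundary_dart S hx hy
  have hc : c ∈ q.support := h d.adj hd₁ hd₂ ▸ q.dart_snd_mem_support_of_mem_darts hd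
  exact hq ▸ q.dist_add_dist_le_length hc

/-- Such a path would have to pass through `c` twice. -/
theorem ExitsVia.notMem_of_mem_support (h : G.ExitsVia S c) (hc : c ∉ S) {q : G.Walk x y}
    (hq : q.IsPath) (hx : x ∉ S) (hy : y ∉ S) {s : V} (hs : s ∈ q.support) : s ∉ S := by
  intro hsS
  have h₁ : c ∈ (q.takeUntil s hs).support := by
    obtain ⟨d, hd, hd₁, hd₂⟩ := (q.takeUntil s hs).reverse.exists_boundary_dart S hsS hx
    have hmem := (q.takeUntil s hs).reverse.dart_snd_mem_support_of_mem_darts hd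
    rw [Walk.support_reverse, List.mem_reverse] at hmem
    exact h d.adj hd₁ hd₂ ▸ hmem
  have h₂ : c ∈ (q.dropUntil s hs).support.tail := by
    obtain ⟨d, hd, hd₁, hd₂⟩ := (q.dropUntil s hs).exists_boundary_dart S hsS hy
    have hmem := h d.adj hd₁ hd₂ ▸ (q.dropUntil s hs).dart_snd_mem_support_of_mem_darts hd
    exact (Walk.mem_support_iff _ |>.mp hmem).resolve_left fun hcs => hc (hcs ▸ hsS)
  have hnd := hq.support_nodup
  rw [← q.take_spec hs, Walk.support_append] at hnd
  exact List.disjoint_of_nodup_append hnd h₁ h₂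

theorem ExitsVia.mem_of_mem_support (h : G.ExitsVia S c) {q : G.Walk x c} (hq : q.IsPath)
    (hx : x ∈ S) {s : V} (hs : s ∈ q.support) (hsc : s ≠ c) : s ∈ S := by
  by_contra hsS
  obtain ⟨d, hd, hd₁, hd₂⟩ := (q.takeUntil s hs).exists_boundary_dart S hx hsS
  have hc := h d.adj hd₁ hd₂ ▸ (q.takeUntil s hs).dart_snd_mem_support_of_mem_darts hd
  have hnd := hq.support_nodup
  rw [← q.take_spec hs, Walk.support_append] at hnd
  refine List.disjoint_of_nodup_append hnd hc ?_
  have hmem := (q.dropUntil s hs).end_mem_support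
  exact (Walk.mem_support_iff _ |>.mp hmem).resolve_left fun hcs => hsc hcs.symm

theorem ExitsVia.exists_walk_of_notMem (hG : G.Connected) (h : G.ExitsVia S c) (hc : c ∉ S)
    (hGH : ∀ ⦃a b⦄, a ∉ S → b ∉ S → G.Adj a b → H.Adj a b) (hx : x ∉ S) (hy : y ∉ S) :
    ∃ q : H.Walk x y, q.length = G.dist x y := by
  obtain ⟨q, hq, hlen⟩ := hG.exists_path_of_dist x y
  rw [← hlen]
  exact q.exists_walk_length_eq fun a b he =>
    hGH (h.notMem_of_mem_support hc hq hx hy (q.fst_mem_support_of_mem_edges he))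
      (h.notMem_of_mem_support hc hq hx hy (q.snd_mem_support_of_mem_edges he))
      (q.adj_of_mem_edges he)

theorem ExitsVia.exists_walk_to (hG : G.Connected) (h : G.ExitsVia S c) (hc : c ∉ S) {c' : V}
    (hGH : ∀ ⦃a b⦄, a ∈ S → b ∈ S → G.Adj a b → H.Adj a b)
    (hport : ∀ ⦃a⦄, a ∈ S → G.Adj a c → H.Adj a c') (hx : x ∈ S) :
    ∃ q : H.Walk x c', q.length = G.dist x c := by
  obtain ⟨q, hq, hlen⟩ := hG.exists_path_of_dist x c
  have hnil : ¬ q.Nil := Walk.not_nil_of_ne fun hxc => hc (hxc ▸ hx)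
  have hsub : ∀ s ∈ q.dropLast.support, s ∈ S := by
    intro s hs
    have hsupp := Walk.support_dropLast_concat hnil
    refine h.mem_of_mem_support hq hx (hsupp ▸ List.mem_append_left _ hs) ?_
    rintro rfl
    exact List.disjoint_of_nodup_append (hsupp ▸ hq.support_nodup) hs
      (List.mem_singleton_self s)
  obtain ⟨r, hr⟩ := q.dropLast.exists_walk_length_eq (H := H) fun a b he =>
    hGH (hsub a (q.dropLast.fst_mem_support_of_mem_edges he))
      (hsub b (q.dropLast.snd_mem_support_of_mem_edges he)) (q.dropLast.adj_of_mem_edges he)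
  refine ⟨r.concat (hport (hsub _ q.dropLast.end_mem_support) (q.adj_penultimate hnil)), ?_⟩
  rw [Walk.length_concat, hr, Walk.length_dropLast_add_one hnil, hlen]

section Eccentricity

variable [Fintype V] {v : V} {n : ℕ}

theorem dist_le_ecc (G : SimpleGraph V) (v y : V) : G.dist v y ≤ ecc G v :=
  Finset.le_sup (Finset.mem_univ y)

theorem ecc_le_iff : ecc G v ≤ n ↔ ∀ y, G.dist v y ≤ n := by
  simp [ecc, Finset.sup_le_iff]

theorem ecc_eq_dist_of_forall_dist_le (h : ∀ y, G.dist v y ≤ G.dist v a) : ecc G v = G.dist v a :=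
  le_antisymm (ecc_le_iff.mpr h) (G.dist_le_ecc v a)

theorem dist_le_graphDiam (G : SimpleGraph V) (x y : V) : G.dist x y ≤ graphDiam G :=
  (G.dist_le_ecc x y).trans (Finset.le_sup (f := fun v => ecc G v) (Finset.mem_univ x))

theorem ExitsVia.ecc_eq_dist_add (hG : G.Connected) (h : G.ExitsVia S c) (hy : y ∉ S)
    (hcy : G.dist c y = ecc G c) (hv : v ∈ S) : ecc G v = G.dist v c + ecc G c := by
  refine le_antisymm (ecc_le_iff.mpr fun z => ?_) ?_
  · exact hG.dist_triangle.trans (Nat.add_le_add_left (G.dist_le_ecc c z) _)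
  · rw [← hcy, ← h.dist_eq_add hG hv hy]
    exact G.dist_le_ecc v y

theorem ecc_le_ecc_of_dist_eq_on_compl (S : Set V) (heq : ∀ y ∉ S, G.dist v y = H.dist v y)
    (hdom : ∀ y ∈ S, ∃ z ∉ S, G.dist v y ≤ G.dist v z) : ecc G v ≤ ecc H v := by
  refine ecc_le_iff.mpr fun y => ?_
  by_cases hy : y ∈ S
  · obtain ⟨z, hz, hyz⟩ := hdom y hy
    exact hyz.trans ((heq z hz).trans_le (H.dist_le_ecc v z))
  · exact (heq y hy).trans_le (H.dist_le_ecc v y)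

end Eccentricity

theorem IsAcyclic.dist_eq_length (hG : G.IsAcyclic) {q : G.Walk x y} (hq : q.IsPath) :
    G.dist x y = q.length := by
  obtain ⟨r, hr, hlen⟩ := q.reachable.exists_path_of_dist
  obtain rfl : r = q := congrArg Subtype.val ((hG.subsingleton_path x y).elim ⟨r, hr⟩ ⟨q, hq⟩)
  exact hlen.symm

def bridgeSide (G : SimpleGraph V) (x y : V) : Set V :=
  {v | (G.deleteEdges {s(x, y)}).Reachable v x}

theorem eq_of_adj_of_mem_bridgeSide (hab : G.Adj a b) (ha : a ∈ G.bridgeSide x y)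
    (hb : b ∉ G.bridgeSide x y) : a = x ∧ b = y := by
  have hxy : s(a, b) = s(x, y) := by
    by_contra hne
    exact hb ((deleteEdges_adj.mpr ⟨hab, hne⟩).symm.reachable.trans ha)
  rcases Sym2.eq_iff.mp hxy with h | ⟨rfl, rfl⟩
  · exact h
  · exact absurd (Reachable.refl _) hb

theorem exitsVia_bridgeSide : G.ExitsVia (G.bridgeSide x y) y :=
  fun _ _ hab ha hb => (eq_of_adj_of_mem_bridgeSide hab ha hb).2

theorem exitsVia_compl_bridgeSide : G.ExitsVia (G.bridgeSide x y)ᶜ x :=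
  fun _ _ hab ha hb => (eq_of_adj_of_mem_bridgeSide hab.symm (not_not.mp hb) ha).1

theorem IsAcyclic.notMem_bridgeSide (hG : G.IsAcyclic) (hxy : G.Adj x y) :
    y ∉ G.bridgeSide x y :=
  fun h => isBridge_iff.mp (isAcyclic_iff_forall_adj_isBridge.mp hG hxy) h.symm

/-- The hypotheses place `a` on the `x`-side and `b` on the `y`-side of the edge `xy`. -/
theorem IsTree.dist_eq_add_or_dist_eq_add (hG : G.IsTree) (hxy : G.Adj x y)
    (ha : G.dist y a = G.dist x a + 1) (hb : G.dist x b = G.dist y b + 1) (v : V) :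
    G.dist v a = G.dist v x + G.dist x a ∨ G.dist v b = G.dist v x + G.dist x b := by
  set A := G.bridgeSide x y
  have hxA : x ∈ A := Reachable.refl _
  have hyA : y ∉ A := hG.isAcyclic.notMem_bridgeSide hxy
  have hdxy : G.dist x y = 1 := dist_eq_one_iff_adj.mpr hxy
  have hdyx : G.dist y x = 1 := dist_eq_one_iff_adj.mpr hxy.symm
  have hcut {s t : V} (hs : s ∈ A) (ht : t ∉ A) : G.dist s t = G.dist s y + G.dist y t :=
    exitsVia_bridgeSide.dist_eq_add hG.connected hs ht
  have hcut' {s t : V} (hs : s ∉ A) (ht : t ∈ A) : G.dist s t = G.dist s x + G.dist x t :=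
    exitsVia_compl_bridgeSide.dist_eq_add hG.connected hs (not_not.mpr ht)
  have haA : a ∈ A := by
    by_contra haA
    have := hcut hxA haA
    omega
  have hbA : b ∉ A := by
    intro hbA
    have := hcut' hyA hbA
    omega
  by_cases hv : v ∈ A
  · have h₁ := hcut hv hbA
    have h₂ := hcut hxA hbA
    have h₃ := hcut' hyA hv
    rw [dist_comm (u := y), dist_comm (u := x) (v := v)] at h₃
    omega
  · exact .inl (hcut' hv haA)

end SimpleGraph

section Mate

variable {G : SimpleGraph V} {u w w' a b x y : V}

theorem notMem_mateU_self : u ∉ mateU G u w := fun hu => hu.1 rfl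

theorem exitsVia_mateU : G.ExitsVia (mateU G u w) u := by
  intro a b hab ha hb
  by_contra hbu
  have hGab : (G.deleteEdges {e | u ∈ e}).Adj a b :=
    deleteEdges_adj.mpr ⟨hab, fun h => (Sym2.mem_iff.mp h).elim (fun h => ha.1 h.symm)
      (fun h => hbu h.symm)⟩
  exact ha.2 (hGab.reachable.trans (not_not.mp fun h => hb ⟨hbu, h⟩))

theorem notMem_mateU_of_mem_support {q : G.Walk x y} (hu : u ∉ q.support)
    (hw : w ∈ q.support) {s : V} (hs : s ∈ q.support) : s ∉ mateU G u w := by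
  have hreach {t : V} (ht : t ∈ q.support) : (G.deleteEdges {e | u ∈ e}).Reachable x t :=
    ((q.takeUntil t ht).toDeleteEdges _ fun _ he hue =>
      hu (q.support_takeUntil_subset_support ht (Walk.mem_support_of_mem_edges he hue))).reachable
  exact fun hsU => hsU.2 ((hreach hs).symm.trans (hreach hw))

theorem mate_adj : (mate G u w w').Adj a b ↔
    (G.Adj a b ∧ ¬ ∃ z ∈ mateU G u w, G.Adj u z ∧ s(a, b) = s(u, z)) ∨
      ((∃ z ∈ mateU G u w, G.Adj u z ∧ s(a, b) = s(w', z)) ∧ a ≠ b) := by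
  simp only [mate, sup_adj, deleteEdges_adj, fromEdgeSet_adj, Set.mem_ofPred_eq]

theorem mate_adj_iff_of_notMem (ha : a ∉ mateU G u w) (hb : b ∉ mateU G u w) :
    (mate G u w w').Adj a b ↔ G.Adj a b := by
  simp only [mate_adj, Sym2.eq_iff]
  grind

theorem mate_adj_iff_of_mem (hw' : w' ∉ mateU G u w) (ha : a ∈ mateU G u w)
    (hb : b ∈ mateU G u w) : (mate G u w w').Adj a b ↔ G.Adj a b := by
  have hu : u ∉ mateU G u w := notMem_mateU_self
  simp only [mate_adj, Sym2.eq_iff]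
  grind

theorem mate_adj_right_iff (hw' : w' ∉ mateU G u w) (ha : a ∈ mateU G u w) :
    (mate G u w w').Adj a w' ↔ G.Adj a u := by
  have hport := @exitsVia_mateU _ G u w a w'
  simp only [mate_adj, Sym2.eq_iff]
  grind [SimpleGraph.Adj.symm]

theorem exitsVia_mate : (mate G u w w').ExitsVia (mateU G u w) w' := by
  intro a b hab ha hb
  have hport := @exitsVia_mateU _ G u w a b
  simp only [mate_adj, Sym2.eq_iff] at hab
  grind [SimpleGraph.Adj.symm]

theorem mate_exists_walk_of_notMem (hG : G.Connected) (hx : x ∉ mateU G u w)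
    (hy : y ∉ mateU G u w) : ∃ q : (mate G u w w').Walk x y, q.length = G.dist x y :=
  exitsVia_mateU.exists_walk_of_notMem hG notMem_mateU_self
    (fun _ _ ha hb hab => (mate_adj_iff_of_notMem ha hb).mpr hab) hx hy

theorem mate_exists_walk_to (hG : G.Connected) (hw' : w' ∉ mateU G u w)
    (hx : x ∈ mateU G u w) : ∃ q : (mate G u w w').Walk x w', q.length = G.dist x u :=
  exitsVia_mateU.exists_walk_to hG notMem_mateU_self
    (fun _ _ ha hb hab => (mate_adj_iff_of_mem hw' ha hb).mpr hab)
    (fun _ ha hau => (mate_adj_right_iff hw' ha).mpr hau) hx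

theorem mate_connected (hG : G.Connected) (hw' : w' ∉ mateU G u w) :
    (mate G u w w').Connected := by
  have : Nonempty V := ⟨u⟩
  have hreach (x : V) : (mate G u w w').Reachable x w' := by
    by_cases hx : x ∈ mateU G u w
    · obtain ⟨q, -⟩ := mate_exists_walk_to hG hw' hx
      exact q.reachable
    · obtain ⟨q, -⟩ := mate_exists_walk_of_notMem hG hx hw'
      exact q.reachable
  exact ⟨fun x y => (hreach x).trans (hreach y).symm⟩

theorem dist_mate_of_notMem (hG : G.Connected) (hw' : w' ∉ mateU G u w)
    (hx : x ∉ mateU G u w) (hy : y ∉ mateU G u w) : (mate G u w w').dist x y = G.dist x y := by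
  refine le_antisymm ?_ ?_
  · obtain ⟨q, hq⟩ := mate_exists_walk_of_notMem hG hx hy
    exact hq ▸ dist_le q
  · obtain ⟨q, hq⟩ := exitsVia_mate.exists_walk_of_notMem (mate_connected hG hw') hw'
      (fun _ _ ha hb hab => (mate_adj_iff_of_notMem ha hb).mp hab) hx hy
    exact hq ▸ dist_le q

theorem dist_mate_right (hG : G.Connected) (hw' : w' ∉ mateU G u w) (hx : x ∈ mateU G u w) :
    (mate G u w w').dist x w' = G.dist x u := by
  refine le_antisymm ?_ ?_
  · obtain ⟨q, hq⟩ := mate_exists_walk_to hG hw' hx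
    exact hq ▸ dist_le q
  · obtain ⟨q, hq⟩ := exitsVia_mate.exists_walk_to (mate_connected hG hw') hw'
      (fun _ _ ha hb hab => (mate_adj_iff_of_mem hw' ha hb).mp hab)
      (fun _ ha haw' => (mate_adj_right_iff hw' ha).mp haw') hx
    exact hq ▸ dist_le q

variable [Fintype V] {v : V}

theorem ecc_mate_right (hG : G.Connected) (hw' : w' ∉ mateU G u w) (ha : a ∉ mateU G u w)
    (hu : ∀ y, G.dist u y ≤ G.dist w' a) (hw'a : ∀ y, G.dist w' y ≤ G.dist w' a) :
    ecc (mate G u w w') w' = (mate G u w w').dist w' a := by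
  refine ecc_eq_dist_of_forall_dist_le fun y => ?_
  rw [dist_mate_of_notMem hG hw' hw' ha]
  by_cases hy : y ∈ mateU G u w
  · rw [SimpleGraph.dist_comm, dist_mate_right hG hw' hy, SimpleGraph.dist_comm]
    exact hu y
  · rw [dist_mate_of_notMem hG hw' hw' hy]
    exact hw'a y

theorem ecc_mate_of_mem (hG : G.Connected) (hw' : w' ∉ mateU G u w) (ha : a ∉ mateU G u w)
    (hua : G.dist u a = G.dist w' a) (hu : ∀ y, G.dist u y ≤ G.dist u a)
    (hw'a : ∀ y, G.dist w' y ≤ G.dist w' a) (hv : v ∈ mateU G u w) :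
    ecc (mate G u w w') v = ecc G v := by
  have hGa := ecc_eq_dist_of_forall_dist_le hu
  have hMa := ecc_mate_right hG hw' ha (hua ▸ hu) hw'a
  rw [exitsVia_mate.ecc_eq_dist_add (mate_connected hG hw') ha hMa.symm hv,
    exitsVia_mateU.ecc_eq_dist_add hG ha hGa.symm hv, dist_mate_right hG hw' hv, hMa, hGa,
    dist_mate_of_notMem hG hw' hw' ha, hua]

theorem ecc_mate_of_notMem (hG : G.Connected) (hw' : w' ∉ mateU G u w) (hv : v ∉ mateU G u w)
    (hdom : ∀ y ∈ mateU G u w, ∃ z ∉ mateU G u w,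
      max (G.dist v u) (G.dist v w') + G.dist u y ≤ G.dist v z) :
    ecc (mate G u w w') v = ecc G v := by
  have heq (y : V) (hy : y ∉ mateU G u w) : (mate G u w w').dist v y = G.dist v y :=
    dist_mate_of_notMem hG hw' hv hy
  refine le_antisymm (ecc_le_ecc_of_dist_eq_on_compl _ heq fun y hy => ?_)
    (ecc_le_ecc_of_dist_eq_on_compl _ (fun y hy => (heq y hy).symm) fun y hy => ?_) <;>
    obtain ⟨z, hz, hle⟩ := hdom y hy <;> refine ⟨z, hz, ?_⟩
  · calc (mate G u w w').dist v y = (mate G u w w').dist y v := SimpleGraph.dist_comm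
      _ = G.dist y u + G.dist w' v := by
        rw [exitsVia_mate.dist_eq_add (mate_connected hG hw') hy hv,
          dist_mate_right hG hw' hy, dist_mate_of_notMem hG hw' hw' hv]
      _ = G.dist v w' + G.dist u y := by
        rw [SimpleGraph.dist_comm (u := y), SimpleGraph.dist_comm (u := w'), add_comm]
      _ ≤ G.dist v z := (Nat.add_le_add_right (le_max_right _ _) _).trans hle
      _ = (mate G u w w').dist v z := (heq z hz).symm
  · calc G.dist v y = G.dist y v := SimpleGraph.dist_comm
      _ = G.dist v u + G.dist u y := by
        rw [exitsVia_mateU.dist_eq_add hG hy hv, add_comm, SimpleGraph.dist_comm (u := u) (v := v),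
          SimpleGraph.dist_comm (u := y) (v := u)]
      _ ≤ G.dist v z := (Nat.add_le_add_right (le_max_left _ _) _).trans hle

theorem ecc_mate_eq (hG : G.IsTree) {j : ℕ} (hwu : G.Adj w u) (hww' : G.Adj w w')
    (hw' : w' ∉ mateU G u w) (ha : a ∉ mateU G u w) (hb : b ∉ mateU G u w)
    (hwa : G.dist w a = j) (hw'a : G.dist w' a = j + 1) (hua : G.dist u a = j + 1)
    (hwb : G.dist w b = G.dist w' b + 1) (hw'b : G.dist w' b + j + 1 = graphDiam G)
    (hjD : graphDiam G ≤ 2 * j) (v : V) : ecc (mate G u w w') v = ecc G v := by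
  have hconn := hG.connected
  have hfar (x : V) : ∃ z ∉ mateU G u w, G.dist x w + (graphDiam G - j) ≤ G.dist x z := by
    rcases hG.dist_eq_add_or_dist_eq_add hww' (by rw [hw'a, hwa]) hwb x with h | h
    · exact ⟨a, ha, by omega⟩
    · exact ⟨b, hb, by omega⟩
  have hcenter (y : V) : G.dist w y ≤ j := by
    obtain ⟨z, -, hz⟩ := hfar y
    have := G.dist_le_graphDiam y z
    rw [SimpleGraph.dist_comm]
    omega
  have hnear {x : V} (hx : G.Adj w x) (y : V) : G.dist x y ≤ j + 1 := by
    have hxw : G.dist x w = 1 := SimpleGraph.dist_comm.trans (dist_eq_one_iff_adj.mpr hx)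
    have := hconn.dist_triangle (u := x) (v := w) (w := y)
    have := hcenter y
    omega
  have hdepth (y : V) (hy : y ∈ mateU G u w) : G.dist u y + (j + 1) ≤ graphDiam G := by
    have h := exitsVia_mateU.dist_eq_add hconn hy ha
    rw [hua, SimpleGraph.dist_comm (u := y) (v := u)] at h
    exact h ▸ G.dist_le_graphDiam y a
  by_cases hv : v ∈ mateU G u w
  · exact ecc_mate_of_mem hconn hw' ha (hua.trans hw'a.symm) (fun y => hua ▸ hnear hwu y)
      (fun y => hw'a ▸ hnear hww' y) hv
  · refine ecc_mate_of_notMem hconn hw' hv fun y hy => ?_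
    obtain ⟨z, hz, hle⟩ := hfar v
    have hvu : G.dist v u ≤ G.dist v w + 1 :=
      hconn.dist_triangle.trans_eq (by rw [dist_eq_one_iff_adj.mpr hwu])
    have hvw' : G.dist v w' ≤ G.dist v w + 1 :=
      hconn.dist_triangle.trans_eq (by rw [dist_eq_one_iff_adj.mpr hww'])
    have := hdepth y hy
    exact ⟨z, hz, by omega⟩

end Mate

theorem stmt10_general [Fintype V] (G : SimpleGraph V) (hG : G.IsTree)
    (v0 vd : V) (p : G.Walk v0 vd) (hp : p.IsPath)
    (hlen : p.length = graphDiam G) (j : ℕ) (hj : graphDiam G ≤ 2 * j)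
    (hjlt : j < graphDiam G) (u : V) (hadj : G.Adj (p.getVert j) u)
    (huP : u ∉ p.support) :
    (∀ v : V, ecc (mate G u (p.getVert j) (p.getVert (j + 1))) v = ecc G v) ∧
      sameEccSeq G (mate G u (p.getVert j) (p.getVert (j + 1))) := by
  have hU {s : V} (hs : s ∈ p.support) : s ∉ mateU G u (p.getVert j) :=
    notMem_mateU_of_mem_support huP (p.getVert_mem_support j) hs
  have hdist {x y : V} {q : G.Walk x y} (hq : q.IsPath) : G.dist y x = q.length :=
    SimpleGraph.dist_comm.trans (hG.isAcyclic.dist_eq_length hq)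
  have hwa := hdist (hp.take j)
  have hw'a := hdist (hp.take (j + 1))
  have hua := hdist ((Walk.concat_isPath_iff hadj).mpr
    ⟨hp.take j, fun hu => huP (List.mem_of_mem_take (p.support_take j ▸ hu))⟩)
  have hwb := hG.isAcyclic.dist_eq_length (hp.drop j)
  have hw'b := hG.isAcyclic.dist_eq_length (hp.drop (j + 1))
  simp only [Walk.take_length, Walk.drop_length, Walk.length_concat, hlen] at hwa hw'a hua hwb hw'b
  have hecc (v : V) : ecc (mate G u (p.getVert j) (p.getVert (j + 1))) v = ecc G v :=
    ecc_mate_eq hG hadj (p.adj_getVert_succ (by omega)) (hU (p.getVert_mem_support _))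
      (hU p.start_mem_support) (hU p.end_mem_support) (by omega) (by omega) (by omega)
      (by omega) (by omega) hj v
  exact ⟨hecc, fun k => Nat.card_congr (Equiv.subtypeEquivRight fun v => by rw [hecc v])⟩

/-- If `T` is a tree that is not a caterpillar, `P = v_0,…,v_d` a longest path,
`u` a non-leaf neighbour of `v_j` (`j ≥ d/2`) not on `P`, then every vertex has the
same eccentricity in the mate `T'` as in `T`; in particular `T` and `T'` have the
same eccentric sequence. -/
theorem stmt10 [Fintype V] (G : SimpleGraph V) (hG : G.IsTree)
    (hNC : ¬ IsCaterpillar G) (v0 vd : V) (p : G.Walk v0 vd) (hp : p.IsPath)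
    (hlen : p.length = graphDiam G) (j : ℕ) (hj : graphDiam G ≤ 2 * j)
    (hjlt : j < graphDiam G) (u : V) (hadj : G.Adj (p.getVert j) u)
    (huP : u ∉ p.support) (huNL : ¬ IsLeaf G u) :
    (∀ v : V, ecc (mate G u (p.getVert j) (p.getVert (j + 1))) v = ecc G v) ∧
      sameEccSeq G (mate G u (p.getVert j) (p.getVert (j + 1))) :=
  stmt10_general G hG v0 vd p hp hlen j hj hjlt u hadj huP
end

section
/- With the notation of the mate construction: for all vertices a, b of T, the distances in T and in its mate T' satisfy d_{T'}(a,b) = d_T(a,b) - 2 if a ∈ U and b ∈ R; d_{T'}(a,b) = d_T(a,b) + 2 if a ∈ U and b = u; and d_{T'}(a,b) = d_T(a,b) in all other cases (up to symmetry in a,b). -/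
open SimpleGraph Finset

attribute [local instance] Classical.propDecidable

variable {V : Type*}

/-!
Upper bounds come from explicit walks in the mate `T'`: a walk of `T` that avoids `u` survives
in `T'`, and a shortest walk of `T` from `a ∈ U` to `u` ends with an edge `zu` that `T'` replaces
by `zw'`. Lower bounds come from the potential `x ↦ d_T(x, b)`, shifted on `U` by
`d_T(w', b) - d_T(u, b)`: this shift makes it `1`-Lipschitz along the edges of `T'`. In any
connected graph this gives `d_{T'} = d_T` between two vertices on the same side of `U`, and
`d_{T'}(a, b) = d_T(a, u) + d_T(w', b)` for `a ∈ U`, `b ∉ U`. In a tree,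
`d_T(u, b) - d_T(w', b)` is `2` on `R`, `-2` at `b = u` and `0` on the rest of `L`.
-/

namespace SimpleGraph

variable {G : SimpleGraph V} {a b x y z t : V}

lemma Adj.dist_le_dist_add_one (h : G.Adj x y) (b : V) : G.dist x b ≤ G.dist y b + 1 := by
  have := h.reachable.dist_triangle_left b
  rw [dist_eq_one_iff_adj.mpr h] at this
  omega

lemma Walk.dist_add_dist_le_length_s11 (W : G.Walk a b) (hz : z ∈ W.support) :
    G.dist a z + G.dist z b ≤ W.length := by
  have hsplit := congrArg Walk.length (W.take_spec hz)
  rw [Walk.length_append] at hsplit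
  have := dist_le (W.takeUntil z hz)
  have := dist_le (W.dropUntil z hz)
  omega

lemma Walk.le_add_length_of_forall_adj {f : V → ℤ}
    (hf : ∀ ⦃x y⦄, G.Adj x y → f x ≤ f y + 1) (W : G.Walk a b) : f a ≤ f b + W.length := by
  induction W with
  | nil => simp
  | cons h _ ih =>
    have := hf h
    rw [Walk.length_cons]
    omega

lemma Reachable.le_add_dist_of_forall_adj {f : V → ℤ}
    (hf : ∀ ⦃x y⦄, G.Adj x y → f x ≤ f y + 1) (h : G.Reachable a b) :
    f a ≤ f b + G.dist a b := by
  obtain ⟨W, hW⟩ := h.exists_walk_length_eq_dist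
  exact hW ▸ W.le_add_length_of_forall_adj hf

lemma IsTree.not_reachable_deleteEdges (hG : G.IsTree) (h : G.Adj x y) :
    ¬ (G.deleteEdges {s(x, y)}).Reachable x y :=
  isBridge_iff.mp (isAcyclic_iff_forall_adj_isBridge.mp hG.2 h)

lemma Connected.dist_eq_dist_add_one_of_not_reachable (hc : G.Connected) (h : G.Adj x y)
    (ht : ¬ (G.deleteEdges {s(x, y)}).Reachable y t) : G.dist y t = G.dist x t + 1 := by
  refine le_antisymm (h.symm.dist_le_dist_add_one t) ?_
  obtain ⟨P, hP, hlen⟩ := hc.exists_path_of_dist y t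
  cases P with
  | nil => exact absurd (Reachable.refl _) ht
  | @cons _ z _ hyz Q =>
    have hxy : s(x, y) ∈ (Walk.cons hyz Q).edges := by
      by_contra he
      exact ht ⟨(Walk.cons hyz Q).toDeleteEdge _ he⟩
    rw [Walk.edges_cons, List.mem_cons] at hxy
    rcases hxy with hxy | hxy
    · obtain rfl : z = x := by
        rcases Sym2.eq_iff.mp hxy with ⟨hxy, -⟩ | ⟨hxz, -⟩
        · exact absurd hxy h.ne
        · exact hxz.symm
      have := dist_le Q
      rw [Walk.length_cons] at hlen
      omega
    · exact absurd (Q.snd_mem_support_of_mem_edges hxy) (Walk.cons_isPath_iff _ _ |>.mp hP).2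

end SimpleGraph

open SimpleGraph

section mate

variable {G : SimpleGraph V} {u w w' a b x y z t : V}

lemma mem_mateU_of_adj (hx : x ∈ mateU G u w) (h : G.Adj x y) (hy : y ≠ u) :
    y ∈ mateU G u w := by
  refine ⟨hy, fun hr => hx.2 (Reachable.trans (Adj.reachable ?_) hr)⟩
  simp only [deleteEdges_adj, Set.mem_ofPred_eq, Sym2.mem_iff, not_or]
  exact ⟨h, fun hu => hx.1 hu.symm, fun hu => hy hu.symm⟩

lemma mem_mateU_of_walk (hx : x ∈ mateU G u w) (W : G.Walk x t) (hu : u ∉ W.support) :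
    t ∈ mateU G u w := by
  induction W with
  | nil => exact hx
  | cons h W ih =>
    rw [Walk.support_cons, List.mem_cons, not_or] at hu
    exact ih (mem_mateU_of_adj hx h fun hy => hu.2 (hy ▸ W.start_mem_support)) hu.2

lemma notMem_mateU_of_adj (hu : u ≠ w) (h : G.Adj w y) (hy : y ≠ u) : y ∉ mateU G u w := by
  refine fun hyU => hyU.2 (Adj.reachable ?_)
  simp only [deleteEdges_adj, Set.mem_ofPred_eq, Sym2.mem_iff, not_or]
  exact ⟨h.symm, hy.symm, hu⟩

lemma dist_eq_dist_add_dist_of_mem_mateU (hc : G.Connected) (ha : a ∈ mateU G u w)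
    (ht : t ∉ mateU G u w) : G.dist a t = G.dist a u + G.dist u t := by
  obtain ⟨P, hP⟩ := hc.exists_walk_length_eq_dist a t
  have hu : u ∈ P.support := by
    by_contra hu
    exact ht (mem_mateU_of_walk ha P hu)
  exact le_antisymm hc.dist_triangle (hP ▸ P.dist_add_dist_le_length_s11 hu)

lemma mate_adj_of_mem_mateU (hw' : w' ∉ mateU G u w) (hz : z ∈ mateU G u w) (h : G.Adj u z) :
    (mate G u w w').Adj w' z := by
  rw [mate, sup_adj, fromEdgeSet_adj]
  exact Or.inr ⟨⟨z, hz, h, rfl⟩, fun hw'z => hw' (hw'z ▸ hz)⟩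

lemma exists_mate_walk (W : G.Walk x y) (hW : ∀ z ∈ mateU G u w, s(u, z) ∉ W.edges) :
    ∃ W' : (mate G u w w').Walk x y, W'.length = W.length := by
  have hsub : ∀ e ∈ W.edges, e ∈ (mate G u w w').edgeSet := by
    intro e he
    refine edgeSet_mono le_sup_left ?_
    rw [edgeSet_deleteEdges]
    refine ⟨W.edges_subset_edgeSet he, ?_⟩
    rintro ⟨z, hz, -, rfl⟩
    exact hW z hz he
  exact ⟨W.transfer _ hsub, W.length_transfer hsub⟩

lemma exists_mate_walk_of_notMem_support (W : G.Walk x y) (hu : u ∉ W.support) :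
    ∃ W' : (mate G u w w').Walk x y, W'.length = W.length :=
  exists_mate_walk W fun _ _ he => hu (W.fst_mem_support_of_mem_edges he)

lemma exists_mate_walk_of_mem_mateU (hc : G.Connected) (hw' : w' ∉ mateU G u w)
    (ha : a ∈ mateU G u w) : ∃ W : (mate G u w w').Walk w' a, W.length = G.dist a u := by
  obtain ⟨P, hP, hlen⟩ := hc.exists_path_of_dist u a
  cases P with
  | nil => exact absurd rfl ha.1
  | @cons _ z _ huz Q =>
    have huQ : u ∉ Q.support := (Walk.cons_isPath_iff _ _ |>.mp hP).2
    have hz : z ∈ mateU G u w :=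
      mem_mateU_of_walk ha Q.reverse (by rwa [Walk.support_reverse, List.mem_reverse])
    obtain ⟨W, hW⟩ := exists_mate_walk_of_notMem_support (w := w) (w' := w') Q huQ
    refine ⟨.cons (mate_adj_of_mem_mateU hw' hz huz) W, ?_⟩
    rw [Walk.length_cons, hW, dist_comm, ← hlen, Walk.length_cons]

/-- A shortest walk between two vertices outside `U` never enters `U`, since it could only
enter and leave `U` through `u`. -/
lemma exists_mate_walk_of_notMem_mateU_of_notMem_mateU (hc : G.Connected) (ha : a ∉ mateU G u w)
    (hb : b ∉ mateU G u w) : ∃ W : (mate G u w w').Walk a b, W.length = G.dist a b := by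
  obtain ⟨P, hP⟩ := hc.exists_walk_length_eq_dist a b
  refine (exists_mate_walk P fun z hz he => ?_).imp fun _ h => h.trans hP
  have hsplit := P.dist_add_dist_le_length_s11 (P.snd_mem_support_of_mem_edges he)
  have hza := dist_eq_dist_add_dist_of_mem_mateU hc hz ha
  have hzb := dist_eq_dist_add_dist_of_mem_mateU hc hz hb
  have hzu : 0 < G.dist z u := hc.pos_dist_of_ne hz.1
  have htri := hc.dist_triangle (u := a) (v := u) (w := b)
  rw [dist_comm (u := a) (v := z), dist_comm (u := a) (v := u)] at *
  omega

lemma exists_mate_walk_le_of_mem_mateU_of_mem_mateU (hc : G.Connected) (hw' : w' ∉ mateU G u w)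
    (ha : a ∈ mateU G u w) (hb : b ∈ mateU G u w) :
    ∃ W : (mate G u w w').Walk a b, W.length ≤ G.dist a b := by
  obtain ⟨P, hP⟩ := hc.exists_walk_length_eq_dist a b
  by_cases hu : u ∈ P.support
  · obtain ⟨Wa, hWa⟩ := exists_mate_walk_of_mem_mateU hc hw' ha
    obtain ⟨Wb, hWb⟩ := exists_mate_walk_of_mem_mateU hc hw' hb
    refine ⟨Wa.reverse.append Wb, ?_⟩
    have := P.dist_add_dist_le_length_s11 hu
    rw [Walk.length_append, Walk.length_reverse, hWa, hWb, dist_comm (u := b)]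
    omega
  · obtain ⟨W, hW⟩ := exists_mate_walk_of_notMem_support (w := w) (w' := w') P hu
    exact ⟨W, (hW.trans hP).le⟩

/-- The shift on `U` turns each new edge `w'z` of the mate into a copy of the old edge `uz`. -/
noncomputable def matePotential (G : SimpleGraph V) (u w w' b x : V) : ℤ :=
  G.dist x b + if x ∈ mateU G u w then (G.dist w' b - G.dist u b : ℤ) else 0

lemma matePotential_le_of_mate_adj (hw' : w' ∉ mateU G u w) (h : (mate G u w w').Adj x y) :
    matePotential G u w w' b x ≤ matePotential G u w w' b y + 1 := by
  rw [mate, sup_adj, deleteEdges_adj, fromEdgeSet_adj] at h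
  rcases h with ⟨hxy, hdel⟩ | ⟨⟨z, hz, huz, he⟩, -⟩
  · have hside : ∀ ⦃x y⦄, G.Adj x y →
        s(x, y) ∉ {e | ∃ z ∈ mateU G u w, G.Adj u z ∧ e = s(u, z)} →
        x ∈ mateU G u w → y ∈ mateU G u w := by
      intro x y hxy hdel hx
      refine mem_mateU_of_adj hx hxy fun hyu => hdel ⟨x, hx, hyu ▸ hxy.symm, ?_⟩
      rw [hyu, Sym2.eq_swap]
    have hiff : x ∈ mateU G u w ↔ y ∈ mateU G u w :=
      ⟨hside hxy hdel, hside hxy.symm (by rwa [Sym2.eq_swap])⟩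
    have := hxy.dist_le_dist_add_one b
    unfold matePotential
    by_cases hx : x ∈ mateU G u w
    · simp only [hx, hiff.mp hx, if_true]
      omega
    · simp only [hx, mt hiff.mpr hx, if_false]
      omega
  · have := huz.dist_le_dist_add_one b
    have := huz.symm.dist_le_dist_add_one b
    rcases Sym2.eq_iff.mp he with ⟨rfl, rfl⟩ | ⟨rfl, rfl⟩ <;>
      simp only [matePotential, hz, hw', if_true, if_false] <;> omega

lemma matePotential_le_add_mate_dist (hw' : w' ∉ mateU G u w)
    (h : (mate G u w w').Reachable a b) :
    matePotential G u w w' b a ≤ matePotential G u w w' b b + (mate G u w w').dist a b :=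
  h.le_add_dist_of_forall_adj fun _ _ hxy => matePotential_le_of_mate_adj hw' hxy

theorem mate_dist_eq_of_mem_mateU_iff (hc : G.Connected) (hw' : w' ∉ mateU G u w)
    (hab : a ∈ mateU G u w ↔ b ∈ mateU G u w) : (mate G u w w').dist a b = G.dist a b := by
  obtain ⟨W, hW⟩ : ∃ W : (mate G u w w').Walk a b, W.length ≤ G.dist a b := by
    by_cases ha : a ∈ mateU G u w
    · exact exists_mate_walk_le_of_mem_mateU_of_mem_mateU hc hw' ha (hab.mp ha)
    · obtain ⟨W, hW⟩ := exists_mate_walk_of_notMem_mateU_of_notMem_mateU hc ha (mt hab.mpr ha)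
      exact ⟨W, hW.le⟩
  have hup := dist_le W
  have hlow := matePotential_le_add_mate_dist hw' ⟨W⟩
  unfold matePotential at hlow
  rw [SimpleGraph.dist_self] at hlow
  by_cases hb : b ∈ mateU G u w
  · simp only [hab.mpr hb, hb, if_true] at hlow
    omega
  · simp only [mt hab.mp hb, hb, if_false] at hlow
    omega

theorem mate_dist_add_dist_eq (hc : G.Connected) (hw' : w' ∉ mateU G u w)
    (ha : a ∈ mateU G u w) (hb : b ∉ mateU G u w) :
    (mate G u w w').dist a b + G.dist u b = G.dist a b + G.dist w' b := by
  obtain ⟨Wa, hWa⟩ := exists_mate_walk_of_mem_mateU hc hw' ha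
  obtain ⟨Wb, hWb⟩ := exists_mate_walk_of_notMem_mateU_of_notMem_mateU (w' := w') hc hw' hb
  have hup := dist_le (Wa.reverse.append Wb)
  have hlow := matePotential_le_add_mate_dist hw' ⟨Wa.reverse.append Wb⟩
  have hsplit := dist_eq_dist_add_dist_of_mem_mateU hc ha hb
  simp only [matePotential, ha, hb, if_true, if_false, SimpleGraph.dist_self] at hlow
  rw [Walk.length_append, Walk.length_reverse] at hup
  omega

end mate

section tree

variable {G : SimpleGraph V} {u w w' a b : V}

lemma dist_eq_dist_add_one_of_notMem_mateU (hG : G.IsTree) (hwu : G.Adj w u)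
    (hb : b ∉ mateU G u w) (hbu : b ≠ u) : G.dist u b = G.dist w b + 1 := by
  refine hG.1.dist_eq_dist_add_one_of_not_reachable hwu fun hub => ?_
  have hbw : (G.deleteEdges {s(w, u)}).Reachable b w := by
    refine Reachable.mono (deleteEdges_anti ?_) (not_not.mp fun h => hb ⟨hbu, h⟩)
    simp
  exact hG.not_reachable_deleteEdges hwu (hub.trans hbw).symm

lemma not_reachable_deleteEdges_of_adj_of_adj (hG : G.IsTree) (hwu : G.Adj w u)
    (hww : G.Adj w w') (huw' : u ≠ w') : ¬ (G.deleteEdges {s(w, w')}).Reachable u w' := by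
  have hwu' : (G.deleteEdges {s(w, w')}).Adj w u := by
    simp only [deleteEdges_adj, Set.mem_singleton_iff, Sym2.eq_iff, not_or, not_and]
    exact ⟨hwu, fun _ => huw', fun h => absurd h hww.ne⟩
  exact fun hr => hG.not_reachable_deleteEdges hww (hwu'.reachable.trans hr)

lemma mate_dist_add_two_of_mem_mateR (hG : G.IsTree) (hwu : G.Adj w u)
    (hww : G.Adj w w') (huw' : u ≠ w') (ha : a ∈ mateU G u w) (hb : b ∈ mateR G u w w') :
    (mate G u w w').dist a b + 2 = G.dist a b := by
  have hbu : b ≠ u := by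
    rintro rfl
    exact not_reachable_deleteEdges_of_adj_of_adj hG hwu hww huw' hb.2
  have hub := dist_eq_dist_add_one_of_notMem_mateU hG hwu hb.1 hbu
  have hwb : G.dist w b = G.dist w' b + 1 := by
    refine hG.1.dist_eq_dist_add_one_of_not_reachable hww.symm fun hr => ?_
    rw [Sym2.eq_swap] at hr
    exact hG.not_reachable_deleteEdges hww (hr.trans hb.2)
  have := mate_dist_add_dist_eq hG.1 (notMem_mateU_of_adj hwu.ne' hww huw'.symm) ha hb.1
  omega

lemma mate_dist_eq_add_two (hG : G.IsTree) (hwu : G.Adj w u) (hww : G.Adj w w')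
    (huw' : u ≠ w') (ha : a ∈ mateU G u w) : (mate G u w w').dist a u = G.dist a u + 2 := by
  have hw'u : G.dist w' u = G.dist w u + 1 :=
    hG.1.dist_eq_dist_add_one_of_not_reachable hww fun hr =>
      not_reachable_deleteEdges_of_adj_of_adj hG hwu hww huw' hr.symm
  have := mate_dist_add_dist_eq hG.1 (notMem_mateU_of_adj hwu.ne' hww huw'.symm) ha
    (fun hu => hu.1 rfl)
  rw [dist_eq_one_iff_adj.mpr hwu] at hw'u
  rw [SimpleGraph.dist_self] at this
  omega

lemma mate_dist_eq_of_notMem_mateR (hG : G.IsTree) (hwu : G.Adj w u)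
    (hww : G.Adj w w') (huw' : u ≠ w') (ha : a ∈ mateU G u w) (hb : b ∉ mateU G u w)
    (hbR : b ∉ mateR G u w w') (hbu : b ≠ u) : (mate G u w w').dist a b = G.dist a b := by
  have hub := dist_eq_dist_add_one_of_notMem_mateU hG hwu hb hbu
  have hw'b : G.dist w' b = G.dist w b + 1 :=
    hG.1.dist_eq_dist_add_one_of_not_reachable hww fun hr => hbR ⟨hb, hr.symm⟩
  have := mate_dist_add_dist_eq hG.1 (notMem_mateU_of_adj hwu.ne' hww huw'.symm) ha hb
  omega

end tree

theorem stmt11_general [Fintype V] (G : SimpleGraph V) (hG : G.IsTree)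
    (v0 vd : V) (p : G.Walk v0 vd)
    (hlen : p.length = graphDiam G) (j : ℕ)
    (hjlt : j < graphDiam G) (u : V) (hadj : G.Adj (p.getVert j) u)
    (huP : u ∉ p.support) :
    ∀ a b : V,
      (a ∈ mateU G u (p.getVert j) → b ∈ mateR G u (p.getVert j) (p.getVert (j + 1)) →
        (mate G u (p.getVert j) (p.getVert (j + 1))).dist a b + 2 = G.dist a b) ∧
      (a ∈ mateU G u (p.getVert j) → b = u →
        (mate G u (p.getVert j) (p.getVert (j + 1))).dist a b = G.dist a b + 2) ∧
      (¬ ((a ∈ mateU G u (p.getVert j) ∧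
            (b ∈ mateR G u (p.getVert j) (p.getVert (j + 1)) ∨ b = u)) ∨
          (b ∈ mateU G u (p.getVert j) ∧
            (a ∈ mateR G u (p.getVert j) (p.getVert (j + 1)) ∨ a = u))) →
        (mate G u (p.getVert j) (p.getVert (j + 1))).dist a b = G.dist a b) := by
  have hww : G.Adj (p.getVert j) (p.getVert (j + 1)) := p.adj_getVert_succ (hlen ▸ hjlt)
  have huw' : u ≠ p.getVert (j + 1) := by
    rintro rfl
    exact huP (p.getVert_mem_support _)
  have hw' := notMem_mateU_of_adj hadj.ne' hww huw'.symm
  intro a b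
  refine ⟨mate_dist_add_two_of_mem_mateR hG hadj hww huw',
    fun ha hb => by subst hb; exact mate_dist_eq_add_two hG hadj hww huw' ha, fun h => ?_⟩
  by_cases ha : a ∈ mateU G u (p.getVert j) <;> by_cases hb : b ∈ mateU G u (p.getVert j)
  · exact mate_dist_eq_of_mem_mateU_iff hG.1 hw' (iff_of_true ha hb)
  · exact mate_dist_eq_of_notMem_mateR hG hadj hww huw' ha hb
      (fun hbR => h (.inl ⟨ha, .inl hbR⟩)) fun hbu => h (.inl ⟨ha, .inr hbu⟩)
  · rw [SimpleGraph.dist_comm, SimpleGraph.dist_comm (G := G)]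
    exact mate_dist_eq_of_notMem_mateR hG hadj hww huw' hb ha
      (fun haR => h (.inr ⟨hb, .inl haR⟩)) fun hau => h (.inr ⟨hb, .inr hau⟩)
  · exact mate_dist_eq_of_mem_mateU_iff hG.1 hw' (iff_of_false ha hb)

/-- Distances in the mate `T'`: they drop by `2` between `U` and `R`, grow by `2`
between `U` and `u`, and are unchanged in all other cases (up to symmetry). -/
theorem stmt11 [Fintype V] (G : SimpleGraph V) (hG : G.IsTree)
    (hNC : ¬ IsCaterpillar G) (v0 vd : V) (p : G.Walk v0 vd) (hp : p.IsPath)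
    (hlen : p.length = graphDiam G) (j : ℕ) (hj : graphDiam G ≤ 2 * j)
    (hjlt : j < graphDiam G) (u : V) (hadj : G.Adj (p.getVert j) u)
    (huP : u ∉ p.support) (huNL : ¬ IsLeaf G u) :
    ∀ a b : V,
      (a ∈ mateU G u (p.getVert j) → b ∈ mateR G u (p.getVert j) (p.getVert (j + 1)) →
        (mate G u (p.getVert j) (p.getVert (j + 1))).dist a b + 2 = G.dist a b) ∧
      (a ∈ mateU G u (p.getVert j) → b = u →
        (mate G u (p.getVert j) (p.getVert (j + 1))).dist a b = G.dist a b + 2) ∧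
      (¬ ((a ∈ mateU G u (p.getVert j) ∧
            (b ∈ mateR G u (p.getVert j) (p.getVert (j + 1)) ∨ b = u)) ∨
          (b ∈ mateU G u (p.getVert j) ∧
            (a ∈ mateR G u (p.getVert j) (p.getVert (j + 1)) ∨ a = u))) →
        (mate G u (p.getVert j) (p.getVert (j + 1))).dist a b = G.dist a b) :=
  stmt11_general G hG v0 vd p hlen j hjlt u hadj huP
end
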